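/- Let N be the family of nowhere dense subsets of the Baire space ℕ^ℕ, and let τ_N be the topology on ℕ^ℕ generated by the family B = {U \ A : U open in the Baire space, A ∈ N} (this family is a base, being closed under finite intersections and covering ℕ^ℕ). Then (ℕ^ℕ, τ_N) is a π-space; indeed, τ_{ω^ω} \ {∅} is a π-base for (ℕ^ℕ, τ_N). -/
import Mathlib


open Set Topology

namespace PiSpacePaper

/-- The restriction `p↾n` of `p : ℕ → ℕ`, as a list of length `n`. -/
def restrictSeq (p : ℕ → ℕ) (n : ℕ) : List ℕ := (List.range n).map p

/-- The basic clopen set `S_a` of the Baire space. -/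
def cyl (a : List ℕ) : Set (ℕ → ℕ) := {p | restrictSeq p a.length = a}



lemma restrictSeq_length (p : ℕ → ℕ) (n : ℕ) : (restrictSeq p n).length = n := by
  simp [restrictSeq]

lemma mem_cyl {p : ℕ → ℕ} {a : List ℕ} :
    p ∈ cyl a ↔ ∀ i, (h : i < a.length) → p i = a[i] := by
  unfold cyl restrictSeq
  constructor
  · intro h i hi
    have : p i = (List.map p (List.range a.length))[i]'(by simpa using hi) := by simp
    have h' : List.map p (List.range a.length) = a := h
    rw [this]
    simp only [h']
  · intro h
    apply List.ext_getElem (by simp)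
    intro i h1 h2
    simpa using h i h2

lemma cyl_nonempty (a : List ℕ) : (cyl a).Nonempty := by
  refine ⟨fun i => a.getD i 0, mem_cyl.2 fun i hi => ?_⟩
  simp [List.getD, List.getElem?_eq_getElem hi]

lemma isOpen_cyl (a : List ℕ) : IsOpen (cyl a) := by
  have : cyl a = ⋂ i ∈ Finset.range a.length, (fun p : ℕ → ℕ => p i) ⁻¹' {a.getD i 0} := by
    ext p
    simp only [mem_cyl, Set.mem_iInter, Set.mem_preimage, Set.mem_singleton_iff,
      Finset.mem_range]
    constructor
    · intro h i hi; rw [h i hi, List.getD_eq_getElem _ _ hi]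
    · intro h i hi; rw [← List.getD_eq_getElem _ _ hi]; exact h i hi
  rw [this]
  exact isOpen_biInter_finset fun i _ => (continuous_apply i).isOpen_preimage _ (isOpen_discrete _)

lemma restrictSeq_succ (p : ℕ → ℕ) (n : ℕ) :
    restrictSeq p (n + 1) = restrictSeq p n ++ [p n] := by
  simp [restrictSeq, List.range_succ]




lemma cyl_nil : cyl ([] : List ℕ) = Set.univ := by
  ext p; simp [cyl, restrictSeq]

lemma cyl_eq_iUnion (a : List ℕ) : cyl a = ⋃ n : ℕ, cyl (a ++ [n]) := by
  ext p
  simp only [Set.mem_iUnion]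
  constructor
  · intro hp
    refine ⟨p a.length, ?_⟩
    show restrictSeq p (a ++ [p a.length]).length = a ++ [p a.length]
    rw [List.length_append, List.length_singleton, restrictSeq_succ]
    rw [show restrictSeq p a.length = a from hp]
  · rintro ⟨n, hn⟩
    have hn0 : restrictSeq p (a ++ [n]).length = a ++ [n] := hn
    have hn' : restrictSeq p (a.length + 1) = a ++ [n] := by
      rwa [show (a ++ [n]).length = a.length + 1 by simp] at hn0
    rw [restrictSeq_succ] at hn'
    exact (List.append_inj' hn' (by simp)).1

lemma cyl_disjoint (a : List ℕ) (n m : ℕ) (hnm : n ≠ m) :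
    cyl (a ++ [n]) ∩ cyl (a ++ [m]) = ∅ := by
  ext p
  simp only [Set.mem_inter_iff, Set.mem_empty_iff_false, iff_false]
  rintro ⟨h1, h2⟩
  have e1 : restrictSeq p (a ++ [n]).length = a ++ [n] := h1
  have e2 : restrictSeq p (a ++ [m]).length = a ++ [m] := h2
  rw [show (a ++ [n]).length = a.length + 1 by simp] at e1
  rw [show (a ++ [m]).length = a.length + 1 by simp] at e2
  have : a ++ [n] = a ++ [m] := e1 ▸ e2 ▸ rfl
  simp at this
  exact hnm this

/-- The fruit `⋂ n, V (p↾n)` of a branch `p` in a Souslin scheme `V`. -/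
def fruit {X : Type*} (V : List ℕ → Set X) (p : ℕ → ℕ) : Set X :=
  ⋂ n : ℕ, V (restrictSeq p n)

lemma fruit_cyl (p : ℕ → ℕ) : fruit cyl p = {p} := by
  ext x
  simp only [fruit, Set.mem_iInter, Set.mem_singleton_iff]
  constructor
  · intro h
    funext i
    have hi := h (i + 1)
    have := mem_cyl.1 hi i (by simp [restrictSeq_length])
    rw [this]
    simp [restrictSeq]
  · rintro rfl n
    show restrictSeq x (restrictSeq x n).length = restrictSeq x n
    rw [restrictSeq_length]

/-- A Souslin scheme `V` covers the set `s`. -/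
def Covers {X : Type*} (V : List ℕ → Set X) (s : Set X) : Prop :=
  V [] = s ∧ ∀ a : List ℕ, V a = ⋃ n : ℕ, V (a ++ [n])

/-- A Souslin scheme `V` partitions the set `s`. -/
def Partitions {X : Type*} (V : List ℕ → Set X) (s : Set X) : Prop :=
  Covers V s ∧ ∀ (a : List ℕ) (n m : ℕ), n ≠ m → V (a ++ [n]) ∩ V (a ++ [m]) = ∅

/-- A Souslin scheme is complete iff all fruits are nonempty. -/
def Complete {X : Type*} (V : List ℕ → Set X) : Prop :=
  ∀ p : ℕ → ℕ, (fruit V p).Nonempty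

/-- A Souslin scheme has strict branches iff every fruit is a singleton. -/
def StrictBranches {X : Type*} (V : List ℕ → Set X) : Prop :=
  ∀ p : ℕ → ℕ, ∃ x : X, fruit V p = {x}

/-- A Souslin scheme is open iff all its members are open sets. -/
def OpenScheme {X : Type*} [TopologicalSpace X] (V : List ℕ → Set X) : Prop :=
  ∀ a : List ℕ, IsOpen (V a)

/-- `flesh V = ⋃ a, V a`. -/
def flesh {X : Type*} (V : List ℕ → Set X) : Set X := ⋃ a : List ℕ, V a

/-- `branches V x = {q ∈ ℕ^ℕ : x ∈ fruit V q}`. -/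
def branches {X : Type*} (V : List ℕ → Set X) (x : X) : Set (ℕ → ℕ) :=
  {q | x ∈ fruit V q}

/-- A family `γ` of subsets is a π-net for a space: all members are nonempty and every
nonempty open set contains a member. -/
def IsPiNet {X : Type*} [TopologicalSpace X] (γ : Set (Set X)) : Prop :=
  (∀ G ∈ γ, G.Nonempty) ∧
  ∀ U : Set X, IsOpen U → U.Nonempty → ∃ G ∈ γ, G ⊆ U

/-- A family `γ` of subsets is a π-base for a space: all members are nonempty open sets
and every nonempty open set contains a member. -/
def IsPiBase {X : Type*} [TopologicalSpace X] (γ : Set (Set X)) : Prop :=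
  (∀ G ∈ γ, IsOpen G ∧ G.Nonempty) ∧
  ∀ U : Set X, IsOpen U → U.Nonempty → ∃ G ∈ γ, G ⊆ U

/-- A π-space: there is an open Souslin scheme that partitions the space, has strict
branches, and whose family of members is a π-base. -/
def IsPiSpace (X : Type*) [TopologicalSpace X] : Prop :=
  ∃ V : List ℕ → Set X, OpenScheme V ∧ Partitions V Set.univ ∧ StrictBranches V ∧
    IsPiBase {S : Set X | ∃ a : List ℕ, S = V a}

/-- A Lusin π-base for a space. -/
def IsLusinPiBase {X : Type*} [TopologicalSpace X] (V : List ℕ → Set X) : Prop :=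
  OpenScheme V ∧ Partitions V Set.univ ∧ StrictBranches V ∧
  ∀ (x : X) (U : Set X), IsOpen U → x ∈ U →
    ∃ (a : List ℕ) (n : ℕ), x ∈ V a ∧ (⋃ i : ℕ, ⋃ _ : n ≤ i, V (a ++ [i])) ⊆ U

/-- A map is quasi-open iff the image of every nonempty open set has nonempty interior. -/
def IsQuasiOpen {X Y : Type*} [TopologicalSpace X] [TopologicalSpace Y] (f : X → Y) : Prop :=
  ∀ U : Set X, IsOpen U → U.Nonempty → (interior (f '' U)).Nonempty

/-- A π-net Souslin scheme on a space `X`: for every finite sequence `a`, the family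
`{V b : b ⊒ a}` is a π-net for the subspace `V a` of `X` (whose nonempty open sets are
exactly the nonempty sets `U ∩ V a` with `U` open in `X`). -/
def IsPiNetScheme {X : Type*} [TopologicalSpace X] (V : List ℕ → Set X) : Prop :=
  ∀ a : List ℕ,
    (∀ b : List ℕ, a <+: b → (V b).Nonempty) ∧
    ∀ U : Set X, IsOpen U → (U ∩ V a).Nonempty → ∃ b : List ℕ, a <+: b ∧ V b ⊆ U ∩ V a

/-- A π-base Souslin scheme on a space is an open π-net Souslin scheme. -/
def IsPiBaseScheme {X : Type*} [TopologicalSpace X] (V : List ℕ → Set X) : Prop :=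
  OpenScheme V ∧ IsPiNetScheme V

/-- A selector on a Souslin scheme `V`: a surjection of the Baire space onto `flesh V`
such that every fiber `f⁻¹(x)` is a dense subset of the subspace `branches V x` of the
Baire space. -/
def IsSelector {X : Type*} (V : List ℕ → Set X) (f : (ℕ → ℕ) → X) : Prop :=
  Set.range f = flesh V ∧
  ∀ x ∈ flesh V, f ⁻¹' {x} ⊆ branches V x ∧ branches V x ⊆ closure (f ⁻¹' {x})

/-- The topology `σ_{τ,f}` on the Baire space, generated by the subbase consisting of the
`τ`-preimages under `f` together with the basic sets `S_a`. -/
def sigmaTop {X : Type*} [TopologicalSpace X] (f : (ℕ → ℕ) → X) :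
    TopologicalSpace (ℕ → ℕ) :=
  TopologicalSpace.generateFrom
    ({S : Set (ℕ → ℕ) | ∃ U : Set X, IsOpen U ∧ S = f ⁻¹' U} ∪
      {S : Set (ℕ → ℕ) | ∃ a : List ℕ, S = cyl a})

/-- The Souslin scheme `V^g`, where `V^g_a = V_{g ∘ a}`. -/
def schemeComp {X : Type*} (V : List ℕ → Set X) (g : ℕ → ℕ) : List ℕ → Set X :=
  fun a => V (a.map g)

/-- A subset of the Baire space is dense-in-itself iff it has no isolated points. -/
def DenseInItself (B : Set (ℕ → ℕ)) : Prop :=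
  ∀ q ∈ B, q ∈ closure (B \ {q})

/-- `X` is a continuous open image of a π-space. -/
def IsContinuousOpenImageOfPiSpace (X : Type) [TopologicalSpace X] : Prop :=
  ∃ (Y : Type) (_ : TopologicalSpace Y) (f : Y → X),
    IsPiSpace Y ∧ Continuous f ∧ IsOpenMap f ∧ Function.Surjective f

/-- The topology `τ_N` on the Baire space generated by the sets `U \ A` with `U` open in
the Baire space and `A` nowhere dense in the Baire space. -/
def tauN : TopologicalSpace (ℕ → ℕ) :=
  TopologicalSpace.generateFrom
    {S : Set (ℕ → ℕ) | ∃ U A : Set (ℕ → ℕ), IsOpen U ∧ IsNowhereDense A ∧ S = U \ A}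


lemma nwd_union {X : Type*} [TopologicalSpace X] {A B : Set X}
    (hA : IsNowhereDense A) (hB : IsNowhereDense B) : IsNowhereDense (A ∪ B) := by
  rw [IsNowhereDense, closure_union, interior_eq_empty_iff_dense_compl, compl_union]
  exact Dense.inter_of_isOpen_left
    (interior_eq_empty_iff_dense_compl.1 hA)
    (interior_eq_empty_iff_dense_compl.1 hB)
    isClosed_closure.isOpen_compl

lemma isOpen_tauN_of_isOpen {U : Set (ℕ → ℕ)} (h : IsOpen U) : @IsOpen _ tauN U := by
  rw [tauN]
  exact TopologicalSpace.isOpen_generateFrom_of_mem ⟨U, ∅, h, isNowhereDense_empty, by simp⟩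

lemma tauN_structure {W : Set (ℕ → ℕ)} (hW : @IsOpen _ tauN W) :
    ∀ x ∈ W, ∃ U A : Set (ℕ → ℕ), IsOpen U ∧ IsNowhereDense A ∧ x ∈ U \ A ∧ U \ A ⊆ W := by
  have hW' : TopologicalSpace.GenerateOpen
      {S : Set (ℕ → ℕ) | ∃ U A : Set (ℕ → ℕ), IsOpen U ∧IsNowhereDense A ∧ S = U \ A} W := hW
  clear hW
  induction hW' with
  | basic S hS =>
    obtain ⟨U, A, hU, hA, rfl⟩ := hS
    exact fun x hx => ⟨U, A, hU, hA, hx, subset_rfl⟩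
  | univ => exact fun x _ => ⟨Set.univ, ∅, isOpen_univ, isNowhereDense_empty, by simp, by simp⟩
  | inter S T _ _ ihS ihT =>
    intro x hx
    obtain ⟨U1, A1, hU1, hA1, hx1, hs1⟩ := ihS x hx.1
    obtain ⟨U2, A2, hU2, hA2, hx2, hs2⟩ := ihT x hx.2
    refine ⟨U1 ∩ U2, A1 ∪ A2, hU1.inter hU2, nwd_union hA1 hA2,
      ⟨⟨hx1.1, hx2.1⟩, ?_⟩, ?_⟩
    · rintro (h | h); exacts [hx1.2 h, hx2.2 h]
    · intro y hy
      exact ⟨hs1 ⟨hy.1.1, fun h => hy.2 (Or.inl h)⟩, hs2 ⟨hy.1.2, fun h => hy.2 (Or.inr h)⟩⟩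
  | sUnion S _ ih =>
    intro x hx
    obtain ⟨s, hs, hxs⟩ := hx
    obtain ⟨U, A, hU, hA, hxUA, hsub⟩ := ih s hs x hxs
    exact ⟨U, A, hU, hA, hxUA, hsub.trans (Set.subset_sUnion_of_mem hs)⟩

/-- Every nonempty tauN-open set contains a cylinder. -/
lemma exists_cyl_subset {W : Set (ℕ → ℕ)} (hW : @IsOpen _ tauN W) (hne : W.Nonempty) :
    ∃ a : List ℕ, cyl a ⊆ W := by
  obtain ⟨x, hx⟩ := hne
  obtain ⟨U, A, hU, hA, hxUA, hsub⟩ := tauN_structure hW x hx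
  -- V = U \ closure A is open nonempty in the Baire topology
  have hVopen : IsOpen (U \ closure A) := hU.sdiff isClosed_closure
  have hVne : (U \ closure A).Nonempty := by
    by_contra h
    rw [Set.not_nonempty_iff_eq_empty, Set.diff_eq_empty] at h
    have : x ∈ interior (closure A) := (interior_maximal h hU) hxUA.1
    rw [hA] at this
    exact this
  obtain ⟨y, hy⟩ := hVne
  obtain ⟨I, u, hIu, hpi⟩ := isOpen_pi_iff.1 hVopen y hy
  set n := (I.sup id) + 1 with hn
  refine ⟨restrictSeq y n, fun p hp => ?_⟩
  have hpy : ∀ i < n, p i = y i := by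
    intro i hi
    have := mem_cyl.1 hp i (by simpa [restrictSeq_length] using hi)
    rw [this]
    simp [restrictSeq]
  have : p ∈ (I : Set ℕ).pi u := by
    intro i hi
    have hin : i < n := Nat.lt_succ_of_le (Finset.le_sup (f := id) hi)
    rw [hpy i hin]
    exact (hIu i hi).2
  have hpV : p ∈ U \ closure A := hpi this
  exact hsub ⟨hpV.1, fun h => hpV.2 (subset_closure h)⟩


/-- (ℕ^ℕ, τ_N) is a π-space; indeed τ_{ω^ω} \ {∅} is a π-base for
(ℕ^ℕ, τ_N). -/
theorem statement6 :
    @IsPiSpace (ℕ → ℕ) tauN ∧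
    @IsPiBase (ℕ → ℕ) tauN {U : Set (ℕ → ℕ) | IsOpen U ∧ U.Nonempty} := by
  constructor
  · refine ⟨cyl, ?_, ⟨⟨cyl_nil, cyl_eq_iUnion⟩, cyl_disjoint⟩, ?_, ?_, ?_⟩
    · exact fun a => isOpen_tauN_of_isOpen (isOpen_cyl a)
    · exact fun p => ⟨p, fruit_cyl p⟩
    · rintro G ⟨a, rfl⟩
      exact ⟨isOpen_tauN_of_isOpen (isOpen_cyl a), cyl_nonempty a⟩
    · intro U hU hUne
      obtain ⟨a, ha⟩ := exists_cyl_subset hU hUne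
      exact ⟨cyl a, ⟨a, rfl⟩, ha⟩
  · refine ⟨?_, ?_⟩
    · rintro G ⟨hG, hGne⟩
      exact ⟨isOpen_tauN_of_isOpen hG, hGne⟩
    · intro U hU hUne
      obtain ⟨a, ha⟩ := exists_cyl_subset hU hUne
      exact ⟨cyl a, ⟨isOpen_cyl a, cyl_nonempty a⟩, ha⟩
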